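/- Let x_1, …, x_n ∈ ℝ^d, let 0 < r ≤ R with ‖x_t‖ ≤ R for all t, and define matrices A_0, A_1, …, A_n recursively by A_0 = (1/r)·I and, for t ≥ 1, A_t = Â_t · A_{t−1} if ‖A_{t−1} x_t‖ > 1 (where Â_t is the update matrix for (A_{t−1}, x_t)) and A_t = A_{t−1} otherwise. Let J ∈ ℝ^{d×d} be nonsingular with ‖J x_t‖ ≤ 1 for all t, 1/R ≤ σ_max(J) ≤ 1/r, and σ_max(J)/σ_min(J) ≤ R/r. Then E_{A_n} ⊆ α · E_J, where α = √( (e/(e−1)) · d · (1 + 4 log(R/r)) ). -/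

import Mathlib

/-!
The potential `Φ_J(A) = ‖J A⁻¹‖_F² - 2 log |det (J A⁻¹)|` does not increase along the algorithm:
an update at a point with `ℓ = ‖A x‖ > 1` adds `(1 - ℓ⁻²) ‖J x‖² ≤ 1 - ℓ⁻² ≤ 2 log ℓ` to the
Frobenius term and `2 log ℓ` to the log-determinant term. Initially `‖r J‖_F² ≤ d σ_max(r J)² ≤ d`
and `|det (r J)|⁻¹ ≤ σ_max((r J)⁻¹)^d ≤ (R / r)^(2d)`, so `Φ_J(A₀) ≤ d (1 + 4 log (R / r))`.
Finally `log λ ≤ λ / e` for the eigenvalues `λ` of `Mᵀ M`, `M = J Aₙ⁻¹`, gives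
`‖M‖_F² ≤ e / (e - 1) · Φ_J(Aₙ)`, and `‖J y‖ ≤ ‖M‖_F ‖Aₙ y‖ ≤ ‖M‖_F` on `E_{Aₙ}`.
-/

noncomputable section

open scoped Pointwise

/-- `A x`, viewed as a vector in Euclidean space. -/
def mulVecE {d : ℕ} (A : Matrix (Fin d) (Fin d) ℝ) (x : EuclideanSpace ℝ (Fin d)) :
    EuclideanSpace ℝ (Fin d) :=
  WithLp.toLp 2 (A.mulVec x)

/-- The origin-centered ellipsoid determined by a matrix `A`. -/
def Ellip {d : ℕ} (A : Matrix (Fin d) (Fin d) ℝ) : Set (EuclideanSpace ℝ (Fin d)) :=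
  {x | ‖mulVecE A x‖ ≤ 1}

/-- The largest singular value (= Euclidean operator norm) of a matrix. -/
def sMax {d : ℕ} (A : Matrix (Fin d) (Fin d) ℝ) : ℝ :=
  ‖Matrix.toEuclideanCLM (𝕜 := ℝ) A‖

/-- The smallest singular value of a nonsingular matrix. -/
def sMin {d : ℕ} (A : Matrix (Fin d) (Fin d) ℝ) : ℝ :=
  (sMax A⁻¹)⁻¹

/-- Condition number (aspect ratio of the ellipsoid `Ellip A`). -/
def condNum {d : ℕ} (A : Matrix (Fin d) (Fin d) ℝ) : ℝ :=
  sMax A / sMin A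

/-- Squared Frobenius norm. -/
def frobSq {d : ℕ} (A : Matrix (Fin d) (Fin d) ℝ) : ℝ :=
  ∑ i, ∑ j, (A i j) ^ 2

/-- Minimum-volume-ellipsoid update matrix `Â` for `(A, x)`. -/
def updateMatrix {d : ℕ} (A : Matrix (Fin d) (Fin d) ℝ) (x : EuclideanSpace ℝ (Fin d)) :
    Matrix (Fin d) (Fin d) ℝ :=
  1 - ((1 - (‖mulVecE A x‖)⁻¹) / ‖mulVecE A x‖ ^ 2) •
        Matrix.vecMulVec (mulVecE A x) (mulVecE A x)

/-- Potential function `Φ_J(A)`. -/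
def potential {d : ℕ} (J A : Matrix (Fin d) (Fin d) ℝ) : ℝ :=
  frobSq (J * A⁻¹) - 2 * Real.log |(J * A⁻¹).det|


open scoped Matrix

namespace Matrix

theorem det_one_add_vecMulVec {m α : Type*} [Fintype m] [DecidableEq m] [CommRing α]
    (u v : m → α) :
    (1 + vecMulVec u v).det = 1 + v ⬝ᵥ u := by
  rw [vecMulVec_eq (Fin 1), det_one_add_replicateCol_mul_replicateRow]

end Matrix

open Matrix

variable {d : ℕ}

lemma mulVecE_mul (A B : Matrix (Fin d) (Fin d) ℝ) (x : EuclideanSpace ℝ (Fin d)) :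
    mulVecE (A * B) x = mulVecE A (mulVecE B x) := by
  simp [mulVecE, mulVec_mulVec]

lemma mulVecE_smul (A : Matrix (Fin d) (Fin d) ℝ) (c : ℝ) (x : EuclideanSpace ℝ (Fin d)) :
    mulVecE A (c • x) = c • mulVecE A x := by
  simp [mulVecE, mulVec_smul]

lemma norm_sq_eq_dotProduct (v : EuclideanSpace ℝ (Fin d)) : ‖v‖ ^ 2 = ⇑v ⬝ᵥ ⇑v := by
  rw [← real_inner_self_eq_norm_sq, EuclideanSpace.inner_eq_star_dotProduct]
  simp

lemma norm_mulVecE_le (A : Matrix (Fin d) (Fin d) ℝ) (x : EuclideanSpace ℝ (Fin d)) :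
    ‖mulVecE A x‖ ≤ sMax A * ‖x‖ := by
  have : mulVecE A x = toEuclideanCLM (𝕜 := ℝ) A x := by
    ext i; exact (congrFun (ofLp_toEuclideanCLM (𝕜 := ℝ) A x) i).symm
  rw [this]
  exact (toEuclideanCLM (𝕜 := ℝ) A).le_opNorm x

lemma sMax_nonneg (A : Matrix (Fin d) (Fin d) ℝ) : 0 ≤ sMax A := norm_nonneg _

lemma sMax_smul (c : ℝ) (A : Matrix (Fin d) (Fin d) ℝ) : sMax (c • A) = |c| * sMax A := by
  rw [sMax, map_smul, norm_smul, Real.norm_eq_abs, sMax]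

lemma frobSq_nonneg (A : Matrix (Fin d) (Fin d) ℝ) : 0 ≤ frobSq A := by
  unfold frobSq; positivity

lemma norm_mulVecE_sq_le (A : Matrix (Fin d) (Fin d) ℝ) (x : EuclideanSpace ℝ (Fin d)) :
    ‖mulVecE A x‖ ^ 2 ≤ frobSq A * ‖x‖ ^ 2 := by
  rw [norm_sq_eq_dotProduct, norm_sq_eq_dotProduct, frobSq, Finset.sum_mul]
  refine Finset.sum_le_sum fun i _ => ?_
  simpa [mulVecE, mulVec, dotProduct, ← sq] using Finset.sum_mul_sq_le_sq_mul_sq _ (A i) x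

lemma frobSq_le_card_mul_sMax_sq (A : Matrix (Fin d) (Fin d) ℝ) :
    frobSq A ≤ d * sMax A ^ 2 := by
  have hcol (j : Fin d) : ∑ i, A i j ^ 2 ≤ sMax A ^ 2 := by
    have h := norm_mulVecE_le A (EuclideanSpace.single j 1)
    rw [PiLp.norm_single, norm_one, mul_one] at h
    calc ∑ i, A i j ^ 2 = ‖mulVecE A (EuclideanSpace.single j 1)‖ ^ 2 := by
          rw [norm_sq_eq_dotProduct]; simp [mulVecE, dotProduct, sq]
      _ ≤ sMax A ^ 2 := pow_le_pow_left₀ (norm_nonneg _) h 2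
  calc frobSq A = ∑ j, ∑ i, A i j ^ 2 := Finset.sum_comm
    _ ≤ ∑ _j : Fin d, sMax A ^ 2 := Finset.sum_le_sum fun j _ => hcol j
    _ = d * sMax A ^ 2 := by simp

lemma frobSq_add_smul_vecMulVec (M : Matrix (Fin d) (Fin d) ℝ) (b : ℝ) (w z : Fin d → ℝ) :
    frobSq (M + b • vecMulVec w z)
      = frobSq M + 2 * b * (w ⬝ᵥ M *ᵥ z) + b ^ 2 * (w ⬝ᵥ w) * (z ⬝ᵥ z) := by
  simp only [frobSq, dotProduct, mulVec, Matrix.add_apply, Matrix.smul_apply, vecMulVec_apply,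
    smul_eq_mul, add_sq, Finset.sum_add_distrib, Finset.mul_sum, Finset.sum_mul]
  congr 1
  · congr 1
    exact Finset.sum_congr rfl fun i _ => Finset.sum_congr rfl fun j _ => by ring
  · rw [Finset.sum_comm]
    exact Finset.sum_congr rfl fun i _ => Finset.sum_congr rfl fun j _ => by ring

section SingularValues

variable (M : Matrix (Fin d) (Fin d) ℝ)

abbrev sqSingularValues : Fin d → ℝ := (posSemidef_conjTranspose_mul_self M).isHermitian.eigenvalues

lemma sum_sqSingularValues : ∑ i, sqSingularValues M i = frobSq M := by
  have := (posSemidef_conjTranspose_mul_self M).isHermitian.trace_eq_sum_eigenvalues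
  simp only [RCLike.ofReal_real_eq_id, id_eq] at this
  rw [← this, frobSq, Finset.sum_comm]
  simp [trace, mul_apply, sq]

lemma prod_sqSingularValues : ∏ i, sqSingularValues M i = M.det ^ 2 := by
  have := (posSemidef_conjTranspose_mul_self M).isHermitian.det_eq_prod_eigenvalues
  simp only [det_mul, det_conjTranspose, star_trivial, RCLike.ofReal_real_eq_id, id_eq] at this
  rw [← this, sq]

lemma sqSingularValues_le (i : Fin d) : sqSingularValues M i ≤ sMax M ^ 2 := by
  have hH := (posSemidef_conjTranspose_mul_self M).isHermitian
  set v := hH.eigenvectorBasis i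
  have hv : ‖v‖ = 1 := hH.eigenvectorBasis.orthonormal.1 i
  have hσ : sqSingularValues M i = ‖mulVecE M v‖ ^ 2 := by
    rw [sqSingularValues, hH.eigenvalues_eq, norm_sq_eq_dotProduct, ← mulVec_mulVec,
      dotProduct_mulVec, vecMul_conjTranspose]
    simp [mulVecE, v]
  have h := norm_mulVecE_le M v
  rw [hv, mul_one] at h
  rw [hσ]
  exact pow_le_pow_left₀ (norm_nonneg _) h 2

lemma sqSingularValues_pos (hM : M.det ≠ 0) (i : Fin d) : 0 < sqSingularValues M i := by
  refine ((posSemidef_conjTranspose_mul_self M).eigenvalues_nonneg i).lt_of_ne' fun h => hM ?_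
  have := prod_sqSingularValues M
  rw [Finset.prod_eq_zero (Finset.mem_univ i) h] at this
  exact pow_eq_zero_iff two_ne_zero |>.mp this.symm

lemma abs_det_le_sMax_pow : |M.det| ≤ sMax M ^ d := by
  refine abs_le_of_sq_le_sq' ?_ (pow_nonneg (sMax_nonneg M) d) |>.2
  calc |M.det| ^ 2 = ∏ i, sqSingularValues M i := by rw [sq_abs, prod_sqSingularValues]
    _ ≤ ∏ _i : Fin d, sMax M ^ 2 := Finset.prod_le_prod
          (fun i _ => (posSemidef_conjTranspose_mul_self M).eigenvalues_nonneg i)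
          (fun i _ => sqSingularValues_le M i)
    _ = (sMax M ^ d) ^ 2 := by simp [← pow_mul, mul_comm]

lemma neg_log_abs_det_le (hM : M.det ≠ 0) {s : ℝ} (hs : sMax M⁻¹ ≤ s) :
    -Real.log |M.det| ≤ d * Real.log s := by
  have hinv : M⁻¹.det = M.det⁻¹ := by rw [det_nonsing_inv, Ring.inverse_eq_inv']
  calc -Real.log |M.det| = Real.log |M⁻¹.det| := by rw [hinv, abs_inv, Real.log_inv]
    _ ≤ Real.log (s ^ d) := Real.log_le_log (by simpa [hinv] using hM)
          ((abs_det_le_sMax_pow _).trans (pow_le_pow_left₀ (sMax_nonneg _) hs d))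
    _ = d * Real.log s := Real.log_pow _ _

/-- `log λ ≤ λ / e` summed over the eigenvalues of `Mᴴ M`. -/
lemma two_mul_log_abs_det_le : 2 * Real.log |M.det| ≤ frobSq M / Real.exp 1 := by
  by_cases hM : M.det = 0
  · simp [hM, frobSq_nonneg M, div_nonneg, (Real.exp_pos 1).le]
  have hpos := sqSingularValues_pos M hM
  rw [show 2 * Real.log |M.det| = Real.log (M.det ^ 2) by simp [Real.log_pow],
    ← prod_sqSingularValues,
    Real.log_prod fun i _ => (hpos i).ne', ← sum_sqSingularValues,
    Finset.sum_div]
  refine Finset.sum_le_sum fun i _ => ?_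
  have := Real.exp_one_mul_le_exp (x := Real.log (sqSingularValues M i))
  rw [Real.exp_log (hpos i)] at this
  rw [le_div_iff₀ (Real.exp_pos 1)]
  linarith

end SingularValues

section Update

variable (A J : Matrix (Fin d) (Fin d) ℝ) (x : EuclideanSpace ℝ (Fin d))

lemma updateMatrix_mul_one_add (hx : 0 < ‖mulVecE A x‖) :
    updateMatrix A x * (1 + ((‖mulVecE A x‖ - 1) / ‖mulVecE A x‖ ^ 2) •
      vecMulVec (mulVecE A x) (mulVecE A x)) = 1 := by
  rw [updateMatrix]
  set l := ‖mulVecE A x‖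
  set Z := vecMulVec (⇑(mulVecE A x)) (mulVecE A x)
  have hZZ : Z * Z = l ^ 2 • Z := by
    rw [vecMulVec_mul_vecMulVec, vecMulVec_smul, ← norm_sq_eq_dotProduct]
  rw [sub_mul, one_mul, mul_add, mul_one, smul_mul_smul, hZZ, smul_smul]
  match_scalars
  · rfl
  · field_simp
    ring

lemma isUnit_det_updateMatrix_mul (hA : IsUnit A.det) (hx : 0 < ‖mulVecE A x‖) :
    IsUnit (updateMatrix A x * A).det := by
  rw [det_mul]
  exact (isUnit_det_of_right_inverse (updateMatrix_mul_one_add A x hx)).mul hA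

/-- With `ℓ = ‖A x‖` and `b = (ℓ - 1) / ℓ²`, `J (Â A)⁻¹ = J A⁻¹ + b (J x) (A x)ᵀ`, whose
determinant is `ℓ det (J A⁻¹)`. -/
lemma potential_updateMatrix_mul (hA : IsUnit A.det) (hJ : J.det ≠ 0) (hx : 0 < ‖mulVecE A x‖) :
    potential J (updateMatrix A x * A) = potential J A
      + (1 - (‖mulVecE A x‖ ^ 2)⁻¹) * ‖mulVecE J x‖ ^ 2 - 2 * Real.log ‖mulVecE A x‖ := by
  set l := ‖mulVecE A x‖
  set b := (l - 1) / l ^ 2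
  set z : Fin d → ℝ := ⇑(mulVecE A x)
  have hinv : (updateMatrix A x * A)⁻¹ = A⁻¹ * (1 + b • vecMulVec z z) := by
    refine inv_eq_right_inv ?_
    rw [mul_assoc, mul_nonsing_inv_cancel_left _ _ hA, updateMatrix_mul_one_add A x hx]
  have hMz : (J * A⁻¹) *ᵥ z = mulVecE J x := by
    simp [z, mulVecE, mulVec_mulVec, mul_assoc, nonsing_inv_mul _ hA]
  have hM : J * (updateMatrix A x * A)⁻¹ = J * A⁻¹ + b • vecMulVec (mulVecE J x) z := by
    rw [hinv, ← mul_assoc, mul_add, mul_one, Matrix.mul_smul, mul_vecMulVec, hMz]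
  have hzz : z ⬝ᵥ z = l ^ 2 := (norm_sq_eq_dotProduct _).symm
  have hdet : (J * A⁻¹).det ≠ 0 := by
    rw [det_mul]
    exact mul_ne_zero hJ (isUnit_nonsing_inv_det A hA).ne_zero
  have hdet' : (J * (updateMatrix A x * A)⁻¹).det = (J * A⁻¹).det * l := by
    rw [hinv, ← mul_assoc, det_mul, ← smul_vecMulVec, det_one_add_vecMulVec, dotProduct_smul,
      hzz, smul_eq_mul, div_mul_cancel₀ _ (pow_pos hx 2).ne']
    ring
  rw [potential, potential, hdet', hM, frobSq_add_smul_vecMulVec, hMz, hzz,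
    ← norm_sq_eq_dotProduct, abs_mul, abs_of_pos hx, Real.log_mul (abs_ne_zero.mpr hdet) hx.ne']
  have hcoef : 2 * b + b ^ 2 * l ^ 2 = 1 - (l ^ 2)⁻¹ := by
    simp only [b]
    field_simp
    ring
  linear_combination ‖mulVecE J x‖ ^ 2 * hcoef

lemma potential_updateMatrix_mul_le (hA : IsUnit A.det) (hJ : J.det ≠ 0)
    (hx : 1 ≤ ‖mulVecE A x‖) (hJx : ‖mulVecE J x‖ ≤ 1) :
    potential J (updateMatrix A x * A) ≤ potential J A := by
  have hl : 0 < ‖mulVecE A x‖ := one_pos.trans_le hx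
  rw [potential_updateMatrix_mul A J x hA hJ hl]
  have hcoef : 0 ≤ 1 - (‖mulVecE A x‖ ^ 2)⁻¹ :=
    sub_nonneg.mpr (inv_le_one_of_one_le₀ (one_le_pow₀ hx))
  have hlog : 1 - (‖mulVecE A x‖ ^ 2)⁻¹ ≤ 2 * Real.log ‖mulVecE A x‖ := by
    simpa [Real.log_pow] using Real.one_sub_inv_le_log_of_pos (pow_pos hl 2)
  have hJx2 : ‖mulVecE J x‖ ^ 2 ≤ 1 := pow_le_one₀ (norm_nonneg _) hJx
  nlinarith

end Update

lemma potential_smul_one_le (J : Matrix (Fin d) (Fin d) ℝ) {r R : ℝ} (hr : 0 < r) (hR : 0 < R)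
    (hJ : J.det ≠ 0) (hJ1 : R⁻¹ ≤ sMax J) (hJ2 : sMax J ≤ r⁻¹)
    (hJcond : sMax J / sMin J ≤ R / r) :
    potential J (r⁻¹ • 1) ≤ d * (1 + 4 * Real.log (R / r)) := by
  have hinv : (r⁻¹ • 1 : Matrix (Fin d) (Fin d) ℝ)⁻¹ = r • 1 :=
    inv_eq_left_inv (by simp [smul_smul, hr.ne'])
  have hfrob : frobSq (r • J) ≤ d := by
    have hs : sMax (r • J) ≤ 1 := by
      rw [sMax_smul, abs_of_pos hr]
      calc r * sMax J ≤ r * r⁻¹ := by gcongr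
        _ = 1 := mul_inv_cancel₀ hr.ne'
    calc frobSq (r • J) ≤ d * sMax (r • J) ^ 2 := frobSq_le_card_mul_sMax_sq _
      _ ≤ d * 1 := by gcongr; exact pow_le_one₀ (sMax_nonneg _) hs
      _ = d := mul_one _
  have hJinv : r⁻¹ * sMax J⁻¹ ≤ (R / r) ^ 2 := by
    have hcond : sMax J * sMax J⁻¹ ≤ R / r := by simpa [sMin, div_eq_mul_inv] using hJcond
    have hRJ : 1 ≤ sMax J * R := by rwa [inv_le_iff_one_le_mul₀ hR] at hJ1
    have : sMax J⁻¹ ≤ R / r * R := by nlinarith [sMax_nonneg J⁻¹]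
    calc r⁻¹ * sMax J⁻¹ ≤ r⁻¹ * (R / r * R) := by gcongr
      _ = (R / r) ^ 2 := by ring
  have hdet : -Real.log |(r • J).det| ≤ d * (2 * Real.log (R / r)) := by
    have hrJ : (r • J)⁻¹ = r⁻¹ • J⁻¹ :=
      inv_eq_left_inv (by simp [smul_smul, hr.ne', nonsing_inv_mul _ (isUnit_iff_ne_zero.mpr hJ)])
    rw [show 2 * Real.log (R / r) = Real.log ((R / r) ^ 2) by rw [Real.log_pow]; norm_num]
    refine neg_log_abs_det_le _ (by simp [hr.ne', hJ]) ?_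
    rwa [hrJ, sMax_smul, abs_of_pos (inv_pos.mpr hr)]
  rw [potential, hinv, Matrix.mul_smul, mul_one]
  linarith

lemma isUnit_det_and_potential_le_initial {n : ℕ} (x : Fin n → EuclideanSpace ℝ (Fin d))
    (A : ℕ → Matrix (Fin d) (Fin d) ℝ) (J : Matrix (Fin d) (Fin d) ℝ) (hA0 : IsUnit (A 0).det)
    (hAt : ∀ t : Fin n, A ((t : ℕ) + 1) =
      if 1 < ‖mulVecE (A t) (x t)‖ then updateMatrix (A t) (x t) * A t else A t)
    (hJ : J.det ≠ 0) (hJx : ∀ t, ‖mulVecE J (x t)‖ ≤ 1) :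
    ∀ t ≤ n, IsUnit (A t).det ∧ potential J (A t) ≤ potential J (A 0) := by
  intro t
  induction t with
  | zero => exact fun _ => ⟨hA0, le_rfl⟩
  | succ t ih =>
    intro ht
    obtain ⟨hA, hpot⟩ := ih (by omega)
    have hstep : A (t + 1) = if 1 < ‖mulVecE (A t) (x ⟨t, ht⟩)‖ then
        updateMatrix (A t) (x ⟨t, ht⟩) * A t else A t := hAt ⟨t, ht⟩
    rw [hstep]
    split_ifs with hx
    · exact ⟨isUnit_det_updateMatrix_mul _ _ hA (one_pos.trans hx),
        (potential_updateMatrix_mul_le _ _ _ hA hJ hx.le (hJx _)).trans hpot⟩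
    · exact ⟨hA, hpot⟩

lemma frobSq_le_mul_sub_two_log_abs_det (M : Matrix (Fin d) (Fin d) ℝ) :
    frobSq M ≤ Real.exp 1 / (Real.exp 1 - 1) * (frobSq M - 2 * Real.log |M.det|) := by
  have he : 0 < Real.exp 1 - 1 := by linarith [Real.add_one_le_exp 1]
  rw [div_mul_eq_mul_div, le_div_iff₀ he]
  have := two_mul_log_abs_det_le M
  rw [le_div_iff₀ (Real.exp_pos 1)] at this
  nlinarith

lemma norm_mulVecE_sq_le_frobSq_of_mem_Ellip {A : Matrix (Fin d) (Fin d) ℝ}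
    (J : Matrix (Fin d) (Fin d) ℝ) (hA : IsUnit A.det) {y : EuclideanSpace ℝ (Fin d)}
    (hy : y ∈ Ellip A) : ‖mulVecE J y‖ ^ 2 ≤ frobSq (J * A⁻¹) := by
  have hJy : mulVecE J y = mulVecE (J * A⁻¹) (mulVecE A y) := by
    rw [← mulVecE_mul, mul_assoc, nonsing_inv_mul _ hA, mul_one]
  rw [hJy]
  calc _ ≤ frobSq (J * A⁻¹) * ‖mulVecE A y‖ ^ 2 := norm_mulVecE_sq_le _ _
    _ ≤ frobSq (J * A⁻¹) * 1 :=
        mul_le_mul_of_nonneg_left (pow_le_one₀ (norm_nonneg _) hy) (frobSq_nonneg _)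
    _ = frobSq (J * A⁻¹) := mul_one _

lemma mem_smul_Ellip_of_norm_le {J : Matrix (Fin d) (Fin d) ℝ} (hJ : J.det ≠ 0) {α : ℝ}
    {y : EuclideanSpace ℝ (Fin d)} (h : ‖mulVecE J y‖ ≤ α) : y ∈ α • Ellip J := by
  rcases ((norm_nonneg _).trans h).eq_or_lt with rfl | hα
  · have hy : y = 0 := by
      have : J *ᵥ y = 0 := by simpa [mulVecE] using h
      simpa using eq_zero_of_mulVec_eq_zero hJ this
    have h0 : (0 : EuclideanSpace ℝ (Fin d)) ∈ Ellip J := by simp [Ellip, mulVecE]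
    rw [hy, Set.zero_smul_set ⟨0, h0⟩]
    rfl
  · rw [Set.mem_smul_set_iff_inv_smul_mem₀ hα.ne']
    show ‖mulVecE J (α⁻¹ • y)‖ ≤ 1
    rw [mulVecE_smul, norm_smul, Real.norm_of_nonneg (inv_nonneg.mpr hα.le)]
    exact inv_mul_le_one_of_le₀ h hα.le

theorem stmt11_general (d n : ℕ) (x : Fin n → EuclideanSpace ℝ (Fin d))
    (r R : ℝ) (hr : 0 < r) (hrR : r ≤ R)
    (A : ℕ → Matrix (Fin d) (Fin d) ℝ)
    (hA0 : A 0 = r⁻¹ • (1 : Matrix (Fin d) (Fin d) ℝ))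
    (hAt : ∀ t : Fin n, A ((t : ℕ) + 1) =
      if 1 < ‖mulVecE (A t) (x t)‖ then updateMatrix (A t) (x t) * A t else A t)
    (J : Matrix (Fin d) (Fin d) ℝ) (hJ : J.det ≠ 0)
    (hJx : ∀ t, ‖mulVecE J (x t)‖ ≤ 1)
    (hJ1 : R⁻¹ ≤ sMax J) (hJ2 : sMax J ≤ r⁻¹)
    (hJcond : sMax J / sMin J ≤ R / r) :
    Ellip (A n) ⊆
      Real.sqrt (Real.exp 1 / (Real.exp 1 - 1) * d * (1 + 4 * Real.log (R / r))) •
        Ellip J := by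
  obtain ⟨hAn, hpot⟩ :=
    isUnit_det_and_potential_le_initial x A J (by simp [hA0, hr.ne']) hAt hJ hJx n le_rfl
  have hinit : potential J (A 0) ≤ d * (1 + 4 * Real.log (R / r)) :=
    hA0 ▸ potential_smul_one_le J hr (hr.trans_le hrR) hJ hJ1 hJ2 hJcond
  have he : 0 ≤ Real.exp 1 / (Real.exp 1 - 1) :=
    div_nonneg (Real.exp_pos 1).le (by linarith [Real.add_one_le_exp 1])
  intro y hy
  refine mem_smul_Ellip_of_norm_le hJ (Real.le_sqrt_of_sq_le ?_)
  calc ‖mulVecE J y‖ ^ 2 ≤ frobSq (J * (A n)⁻¹) :=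
        norm_mulVecE_sq_le_frobSq_of_mem_Ellip J hAn hy
    _ ≤ Real.exp 1 / (Real.exp 1 - 1) * potential J (A n) :=
        frobSq_le_mul_sub_two_log_abs_det _
    _ ≤ Real.exp 1 / (Real.exp 1 - 1) * (d * (1 + 4 * Real.log (R / r))) := by
        gcongr
        exact hpot.trans hinit
    _ = _ := by ring

/-- The scale-dependent streaming algorithm: starting from `A₀ = (1/r)·I` and applying the
minimum-volume-ellipsoid update to each point, the final ellipsoid satisfies
`E_{A_n} ⊆ α • E_J` with `α = √((e/(e−1)) · d · (1 + 4 log (R/r)))`, for every nonsingular `J`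
with `‖J xₜ‖ ≤ 1` for all `t`, `1/R ≤ σ_max J ≤ 1/r` and `σ_max J / σ_min J ≤ R/r`. -/
theorem stmt11 (d n : ℕ) (x : Fin n → EuclideanSpace ℝ (Fin d))
    (r R : ℝ) (hr : 0 < r) (hrR : r ≤ R)
    (hxR : ∀ t, ‖x t‖ ≤ R)
    (A : ℕ → Matrix (Fin d) (Fin d) ℝ)
    (hA0 : A 0 = r⁻¹ • (1 : Matrix (Fin d) (Fin d) ℝ))
    (hAt : ∀ t : Fin n, A ((t : ℕ) + 1) =
      if 1 < ‖mulVecE (A t) (x t)‖ then updateMatrix (A t) (x t) * A t else A t)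
    (J : Matrix (Fin d) (Fin d) ℝ) (hJ : J.det ≠ 0)
    (hJx : ∀ t, ‖mulVecE J (x t)‖ ≤ 1)
    (hJ1 : R⁻¹ ≤ sMax J) (hJ2 : sMax J ≤ r⁻¹)
    (hJcond : sMax J / sMin J ≤ R / r) :
    Ellip (A n) ⊆
      Real.sqrt (Real.exp 1 / (Real.exp 1 - 1) * d * (1 + 4 * Real.log (R / r))) •
        Ellip J :=
  stmt11_general d n x r R hr hrR A hA0 hAt J hJ hJx hJ1 hJ2 hJcond
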